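/- Assume n ≥ m and liminf_{n→∞} mp/ln n ≥ 1 (i.e., mp ≥ (1+o(1)) ln n). Then for all sufficiently large n, the probability that there exists a set S ⊆ V of size |S| = n/5000 with W(S) ≤ 0.3·m is at most exp(-√n). -/

import Mathlib

open MeasureTheory Filter

noncomputable def bern (p : ℝ) : Measure Bool :=
  (PMF.bernoulli (min (Real.toNNReal p) 1) (min_le_right _ _)).toMeasure

/-- The random intersection graph model: the sample space is the bipartite
choice structure `ω : Fin n → Fin m → Bool`, where `ω v w = true` means vertex `v`
chose feature `w`, each choice made independently with probability `p`. -/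
noncomputable def rig (n m : ℕ) (p : ℝ) : Measure (Fin n → Fin m → Bool) :=
  Measure.pi fun _ => Measure.pi fun _ => bern p

/-- The intersection graph determined by the choices `ω`:
two distinct vertices are adjacent iff they share a feature. -/
def rigGraph {n m : ℕ} (ω : Fin n → Fin m → Bool) : SimpleGraph (Fin n) where
  Adj v v' := v ≠ v' ∧ ∃ w, ω v w = true ∧ ω v' w = true
  symm := ⟨by rintro v v' ⟨h, w, h1, h2⟩; exact ⟨h.symm, w, h2, h1⟩⟩
  loopless := ⟨by rintro v ⟨h, -⟩; exact h rfl⟩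

/-- degree of `v` in the intersection graph -/
noncomputable def deg {n m : ℕ} (ω : Fin n → Fin m → Bool) (v : Fin n) : ℕ :=
  Set.ncard {u | (rigGraph ω).Adj v u}

/-- `W(v)`: number of features chosen by `v` -/
noncomputable def Wv {n m : ℕ} (ω : Fin n → Fin m → Bool) (v : Fin n) : ℕ :=
  Set.ncard {w | ω v w = true}

/-- `V(w)`: number of vertices choosing feature `w` -/
noncomputable def Vw {n m : ℕ} (ω : Fin n → Fin m → Bool) (w : Fin m) : ℕ :=
  Set.ncard {v | ω v w = true}

/-- `W'(v)`: number of features chosen by `v` that are chosen by at least two vertices -/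
noncomputable def Wv' {n m : ℕ} (ω : Fin n → Fin m → Bool) (v : Fin n) : ℕ :=
  Set.ncard {w | ω v w = true ∧ 2 ≤ Set.ncard {u | ω u w = true}}

/-- `W(S)`: number of features chosen by at least one vertex of `S` -/
noncomputable def WS {n m : ℕ} (ω : Fin n → Fin m → Bool) (S : Set (Fin n)) : ℕ :=
  Set.ncard {w | ∃ v ∈ S, ω v w = true}

/-- `V(R)`: number of vertices choosing at least one feature of `R` -/
noncomputable def VR {n m : ℕ} (ω : Fin n → Fin m → Bool) (R : Set (Fin m)) : ℕ :=
  Set.ncard {v | ∃ w ∈ R, ω v w = true}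

/-- `W''(K)`: number of features chosen by at least two vertices of `K` -/
noncomputable def WSpp {n m : ℕ} (ω : Fin n → Fin m → Bool) (K : Set (Fin n)) : ℕ :=
  Set.ncard {w | 2 ≤ Set.ncard {v | v ∈ K ∧ ω v w = true}}

/-- `N(S)`: number of vertices outside `S` adjacent to at least one vertex of `S` -/
noncomputable def NS {n m : ℕ} (ω : Fin n → Fin m → Bool) (S : Set (Fin n)) : ℕ :=
  Set.ncard {u | u ∉ S ∧ ∃ v ∈ S, (rigGraph ω).Adj v u}

noncomputable def d0 (n m : ℕ) (p : ℝ) : ℝ := m * p * (1 - (1 - p) ^ (n - 1))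

noncomputable def d1 (n m : ℕ) (p : ℝ) : ℝ := n * m * p ^ 2

/-! A union bound. If `|S| = s := ⌊n/5000⌋` and `W(S) ≤ 0.3 m`, then some set `R` of
`r := ⌈0.7 m⌉` features is chosen by no vertex of `S`: all `s r` choices between `S` and `R`
fail, which has probability `(1 - p)^(s r)`. Summing over the at most `2^n 2^m` pairs `(S, R)`
gives the bound `2^(n+m) (1 - p)^(s r) ≤ exp (n + m - p s r)`, and `m p ≥ (ln n) / 2` makes
`p s r ≥ 3 n` once `ln n ≥ 10^5`, leaving `exp (-n) ≤ exp (-√n)`. -/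

open Finset

instance (p : ℝ) : IsProbabilityMeasure (bern p) := by unfold bern; infer_instance

theorem bern_singleton_false {p : ℝ} (hp0 : 0 ≤ p) (hp1 : p ≤ 1) :
    bern p {false} = ENNReal.ofReal (1 - p) := by
  have hmin : min (Real.toNNReal p) 1 = Real.toNNReal p :=
    min_eq_left (Real.toNNReal_le_one.2 hp1)
  rw [bern, PMF.toMeasure_apply_singleton _ _ (measurableSet_singleton _)]
  simp only [PMF.bernoulli_apply, hmin, Bool.cond_false]
  rw [ENNReal.ofReal_sub 1 hp0, ENNReal.ofReal_one]
  rfl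

theorem rig_forall_mem_forall_mem_false (n m : ℕ) {p : ℝ} (hp0 : 0 ≤ p) (hp1 : p ≤ 1)
    (S : Finset (Fin n)) (R : Finset (Fin m)) :
    rig n m p {ω | ∀ v ∈ S, ∀ w ∈ R, ω v w = false}
      = ENNReal.ofReal (1 - p) ^ (#S * #R) := by
  have hpi : {ω : Fin n → Fin m → Bool | ∀ v ∈ S, ∀ w ∈ R, ω v w = false}
      = (S : Set (Fin n)).pi fun _ => (R : Set (Fin m)).pi fun _ => {false} := by
    ext ω
    simp [Set.mem_pi]
  rw [rig, hpi, Measure.pi_pi_finset]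
  simp only [Measure.pi_pi_finset, bern_singleton_false hp0 hp1, prod_const, ← pow_mul, mul_comm]

theorem WS_add_ncard_unchosen {n m : ℕ} (ω : Fin n → Fin m → Bool) (S : Set (Fin n)) :
    WS ω S + {w | ∀ v ∈ S, ω v w = false}.ncard = m := by
  have hcompl : {w | ∀ v ∈ S, ω v w = false} = {w | ∃ v ∈ S, ω v w = true}ᶜ := by
    ext w
    simp
  rw [WS, hcompl, Set.ncard_add_ncard_compl, Nat.card_eq_fintype_card, Fintype.card_fin]

theorem exists_unchosen_finset {n m r : ℕ} (ω : Fin n → Fin m → Bool) {S : Set (Fin n)}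
    (h : r + WS ω S ≤ m) : ∃ R : Finset (Fin m), #R = r ∧ ∀ v ∈ S, ∀ w ∈ R, ω v w = false := by
  classical
  have hr : r ≤ #{w | ∀ v ∈ S, ω v w = false}.toFinset := by
    have := WS_add_ncard_unchosen ω S
    rw [← Set.ncard_eq_toFinset_card']
    omega
  obtain ⟨R, hRsub, hR⟩ := exists_subset_card_eq hr
  exact ⟨R, hR, fun v hv w hw => by simpa using Set.mem_toFinset.1 (hRsub hw) v hv⟩

theorem rig_exists_add_WS_le (n m : ℕ) {p : ℝ} (hp0 : 0 ≤ p) (hp1 : p ≤ 1) (s r : ℕ) :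
    rig n m p {ω | ∃ S : Set (Fin n), S.ncard = s ∧ r + WS ω S ≤ m}
      ≤ ENNReal.ofReal (2 ^ (n + m) * (1 - p) ^ (s * r)) := by
  classical
  let avoids (S : Finset (Fin n)) (R : Finset (Fin m)) : Set (Fin n → Fin m → Bool) :=
    {ω | ∀ v ∈ S, ∀ w ∈ R, ω v w = false}
  have hcover : {ω | ∃ S : Set (Fin n), S.ncard = s ∧ r + WS ω S ≤ m} ⊆
      ⋃ S ∈ powersetCard s univ, ⋃ R ∈ powersetCard r univ, avoids S R := by
    rintro ω ⟨S, hS, hWS⟩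
    obtain ⟨R, hR, hfalse⟩ := exists_unchosen_finset ω hWS
    simp only [Set.mem_iUnion, mem_powersetCard_univ, exists_prop]
    exact ⟨S.toFinset, by rwa [← Set.ncard_eq_toFinset_card'], R, hR,
      fun v hv => hfalse v (by simpa using hv)⟩
  calc rig n m p {ω | ∃ S : Set (Fin n), S.ncard = s ∧ r + WS ω S ≤ m}
      ≤ ∑ S ∈ powersetCard s univ, ∑ R ∈ powersetCard r univ, rig n m p (avoids S R) :=
        (measure_mono hcover).trans <| (measure_biUnion_finset_le _ _).trans <|
          sum_le_sum fun _ _ => measure_biUnion_finset_le _ _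
    _ = ∑ S ∈ powersetCard s univ, ∑ R ∈ powersetCard r univ,
          ENNReal.ofReal (1 - p) ^ (s * r) := by
        refine sum_congr rfl fun S hS => sum_congr rfl fun R hR => ?_
        rw [mem_powersetCard_univ] at hS hR
        rw [rig_forall_mem_forall_mem_false n m hp0 hp1, hS, hR]
    _ = n.choose s * m.choose r * ENNReal.ofReal (1 - p) ^ (s * r) := by
        simp only [sum_const, card_powersetCard, card_univ, Fintype.card_fin, nsmul_eq_mul]
        ring
    _ ≤ 2 ^ (n + m) * ENNReal.ofReal (1 - p) ^ (s * r) := by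
        rw [pow_add]
        gcongr <;> exact_mod_cast Nat.choose_le_two_pow _ _
    _ = ENNReal.ofReal (2 ^ (n + m) * (1 - p) ^ (s * r)) := by
        rw [ENNReal.ofReal_mul (by positivity), ENNReal.ofReal_pow zero_le_two,
          ENNReal.ofReal_pow (by linarith), ENNReal.ofReal_ofNat]

theorem two_pow_mul_one_sub_pow_le_exp {p : ℝ} (hp : p ≤ 1) (N k : ℕ) :
    (2 : ℝ) ^ N * (1 - p) ^ k ≤ Real.exp (N - p * k) := by
  have h2 : (2 : ℝ) ≤ Real.exp 1 := by linarith [Real.add_one_le_exp 1]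
  have h1p : 1 - p ≤ Real.exp (-p) := by linarith [Real.add_one_le_exp (-p)]
  calc (2 : ℝ) ^ N * (1 - p) ^ k ≤ Real.exp 1 ^ N * Real.exp (-p) ^ k := by
        gcongr
    _ = Real.exp (N - p * k) := by
        rw [← Real.exp_nat_mul, ← Real.exp_nat_mul, ← Real.exp_add]
        ring_nf

theorem div_two_mul_le_natCast_div {n k : ℕ} (hk : 0 < k) (hn : 2 * k ≤ n) :
    (n : ℝ) / (2 * k) ≤ (n / k : ℕ) := by
  have hfloor := Nat.sub_one_lt_floor ((n : ℝ) / k)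
  rw [Nat.floor_div_eq_div] at hfloor
  have hk' : (0 : ℝ) < k := by exact_mod_cast hk
  have hn' : (2 * k : ℝ) ≤ n := by exact_mod_cast hn
  have : (n : ℝ) / (2 * k) + 1 ≤ n / k := by
    rw [div_add_one (by positivity), div_le_div_iff₀ (by positivity) hk']
    nlinarith
  linarith

theorem eventually_mul_log_lt_of_lt_liminf {a : ℕ → ℝ} {c : ℝ} (ha : ∀ n, 0 ≤ a n)
    (h : c < liminf (fun n : ℕ => a n / Real.log n) atTop) :
    ∀ᶠ n : ℕ in atTop, c * Real.log n < a n := by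
  have hbdd : IsBoundedUnder (· ≥ ·) atTop fun n : ℕ => a n / Real.log n :=
    isBoundedUnder_of ⟨0, fun n => div_nonneg (ha n) (Real.log_natCast_nonneg n)⟩
  have hlog : ∀ᶠ n : ℕ in atTop, 0 < Real.log n :=
    (Real.tendsto_log_atTop.comp tendsto_natCast_atTop_atTop).eventually_gt_atTop 0
  filter_upwards [eventually_lt_of_lt_liminf h hbdd, hlog] with n hn hlog
  rwa [lt_div_iff₀ hlog] at hn

theorem three_mul_le_mul_div_mul_ceil {n M : ℕ} {p : ℝ} (hp : 0 ≤ p) (hn : 10000 ≤ n)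
    (hlog : 10 ^ 5 ≤ Real.log n) (hMp : 1 / 2 * Real.log n < M * p) :
    3 * (n : ℝ) ≤ p * ((n / 5000 : ℕ) * ⌈0.7 * (M : ℝ)⌉₊) := by
  have hs : (n : ℝ) / 10000 ≤ (n / 5000 : ℕ) := by
    have h := div_two_mul_le_natCast_div (k := 5000) (by norm_num) hn
    norm_num at h
    exact h
  have hpr : 35000 ≤ p * ⌈0.7 * (M : ℝ)⌉₊ := by
    linarith [mul_le_mul_of_nonneg_left (Nat.le_ceil (0.7 * (M : ℝ))) hp]
  nlinarith

theorem linear_sets_cover_features_m_small (m : ℕ → ℕ) (p : ℕ → ℝ)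
    (hp : ∀ n, p n ∈ Set.Ioo (0 : ℝ) 1)
    (hnm : ∀ᶠ (n : ℕ) in atTop, m n ≤ n)
    (hmp : 1 ≤ Filter.liminf (fun (n : ℕ) => (m n : ℝ) * p n / Real.log n) atTop) :
    ∀ᶠ (n : ℕ) in atTop,
      (rig n (m n) (p n)
        {ω | ∃ S : Set (Fin n), S.ncard = n / 5000 ∧
          (WS ω S : ℝ) ≤ 0.3 * (m n : ℝ)}).toReal
      ≤ Real.exp (-Real.sqrt n) := by
  have hmp' := eventually_mul_log_lt_of_lt_liminf
    (fun n => mul_nonneg (m n).cast_nonneg (hp n).1.le) (hmp.trans_lt' one_half_lt_one)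
  have hlog : ∀ᶠ n : ℕ in atTop, (10 ^ 5 : ℝ) ≤ Real.log n :=
    (Real.tendsto_log_atTop.comp tendsto_natCast_atTop_atTop).eventually_ge_atTop _
  filter_upwards [hnm, hmp', hlog, eventually_ge_atTop 10000] with n hm hmp hlog hn
  obtain ⟨hp0, hp1⟩ := hp n
  have hevent : {ω : Fin n → Fin (m n) → Bool | ∃ S : Set (Fin n), S.ncard = n / 5000 ∧
      (WS ω S : ℝ) ≤ 0.3 * (m n : ℝ)} ⊆
      {ω | ∃ S : Set (Fin n), S.ncard = n / 5000 ∧ ⌈0.7 * (m n : ℝ)⌉₊ + WS ω S ≤ m n} := by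
    rintro ω ⟨S, hS, hWS⟩
    refine ⟨S, hS, ?_⟩
    rw [← Nat.ceil_add_natCast (by positivity), Nat.ceil_le]
    linarith
  have hdecay := three_mul_le_mul_div_mul_ceil hp0.le hn hlog hmp
  have hsqrt : √(n : ℝ) ≤ n := Real.sqrt_le_self_iff.2 (Or.inr (by norm_cast; omega))
  have hm' : (m n : ℝ) ≤ n := by exact_mod_cast hm
  refine ENNReal.toReal_le_of_le_ofReal (Real.exp_nonneg _) <| (measure_mono hevent).trans <|
    (rig_exists_add_WS_le n (m n) hp0.le hp1.le _ _).trans <| ENNReal.ofReal_le_ofReal <|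
      (two_pow_mul_one_sub_pow_le_exp hp1.le _ _).trans <| Real.exp_le_exp.2 ?_
  push_cast at hdecay ⊢
  linarith
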